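/- arXiv:2412.07357 — 2 statements merged into one kernel-verified Lean document; each statement's English description precedes it below -/
import Mathlib

section
/- Let s be a notch profile and let T(x) = max(−π/2, min(x, π/2)) be the threshold map. For every θ ∈ 𝒲_≠, the truncation θ_♮ := T ∘ θ belongs to W and satisfies E_s(θ_♮) ≤ E_s(θ); moreover, if θ ∉ W, then the inequality is strict: E_s(θ_♮) < E_s(θ). -/
open MeasureTheory Real Filter Set Topology

noncomputable section
set_option maxHeartbeats 1000000

def ofMonoCont (M : ℝ → ℝ) (hm : Monotone M) (hc : Continuous M) : StieltjesFunction ℝ :=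
  ⟨M, hm, fun _ => (hc.continuousAt).continuousWithinAt⟩

@[simp] lemma ofMonoCont_apply (M : ℝ → ℝ) (hm : Monotone M) (hc : Continuous M) (x : ℝ) :
    ofMonoCont M hm hc x = M x := rfl

lemma stieltjes_ftc (F : StieltjesFunction ℝ) (hac : F.measure ≪ volume) (x y : ℝ) (hxy : x ≤ y) :
    F y - F x = ∫ t in x..y, (F.measure.rnDeriv volume t).toReal := by
  have h1 : F.measure (Ioc x y) = ∫⁻ t in Ioc x y, F.measure.rnDeriv volume t := by
    conv_lhs => rw [← Measure.withDensity_rnDeriv_eq F.measure volume hac]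
    rw [withDensity_apply _ measurableSet_Ioc]
  have h2 : ∫ t in x..y, (F.measure.rnDeriv volume t).toReal
      = (∫⁻ t in Ioc x y, F.measure.rnDeriv volume t).toReal := by
    rw [intervalIntegral.integral_of_le hxy,
      integral_toReal (Measure.measurable_rnDeriv _ _).aemeasurable
        (ae_restrict_of_ae (Measure.rnDeriv_lt_top _ _))]
  rw [h2, ← h1, F.measure_Ioc, ENNReal.toReal_ofReal (sub_nonneg.2 (F.mono hxy))]

lemma stieltjes_intervalIntegrable (F : StieltjesFunction ℝ) (x y : ℝ) :
    IntervalIntegrable (fun t => (F.measure.rnDeriv volume t).toReal) volume x y := by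
  have key : ∀ u v : ℝ, IntegrableOn (fun t => (F.measure.rnDeriv volume t).toReal) (Ioc u v) volume := by
    intro u v
    apply integrable_toReal_of_lintegral_ne_top
      (Measure.measurable_rnDeriv _ _).aemeasurable.restrict
    have : ∫⁻ t in Ioc u v, F.measure.rnDeriv volume t ≤ F.measure (Ioc u v) :=
      Measure.setLIntegral_rnDeriv_le _
    exact (lt_of_le_of_lt this measure_Ioc_lt_top).ne
  exact ⟨key x y, key y x⟩

/-- KEY: if `|f v - f u| ≤ ∫_u^v w` for `u ≤ v`, then `f` is a.e. differentiable and satisfies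
the fundamental theorem of calculus with its a.e. derivative. -/
lemma key_ftc (w f : ℝ → ℝ) (hInt : ∀ a b : ℝ, IntervalIntegrable w volume a b)
    (hw0 : ∀ x, 0 ≤ w x)
    (hf : ∀ u v : ℝ, u ≤ v → |f v - f u| ≤ ∫ t in u..v, w t) :
    ∃ d : ℝ → ℝ, (∀ᵐ x, HasDerivAt f (d x) x) ∧
      (∀ x y : ℝ, f y = f x + ∫ t in x..y, d t) ∧
      (∀ x y : ℝ, IntervalIntegrable d volume x y) := by
  set Φ : ℝ → ℝ := fun y => ∫ t in (0:ℝ)..y, w t with hΦdef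
  have hΦadd : ∀ u v : ℝ, Φ v - Φ u = ∫ t in u..v, w t := by
    intro u v
    have := intervalIntegral.integral_add_adjacent_intervals (hInt 0 u) (hInt u v)
    simp only [hΦdef]
    linarith
  have hΦmono : Monotone Φ := by
    intro u v huv
    have h0 : 0 ≤ ∫ t in u..v, w t :=
      intervalIntegral.integral_nonneg huv (fun t _ => hw0 t)
    have := hΦadd u v; linarith
  have hΦcont : Continuous Φ := intervalIntegral.continuous_primitive hInt 0
  have hbnd : ∀ u v : ℝ, u ≤ v → |f v - f u| ≤ Φ v - Φ u := by
    intro u v huv; rw [hΦadd]; exact hf u v huv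
  have hfcont : Continuous f := by
    rw [continuous_iff_continuousAt]
    intro x
    have key : Tendsto (fun y => |f y - f x|) (𝓝 x) (𝓝 0) := by
      have hb : ∀ y, |f y - f x| ≤ |Φ y - Φ x| := by
        intro y
        rcases le_total x y with h | h
        · exact (hbnd x y h).trans (le_abs_self _)
        · rw [abs_sub_comm, abs_sub_comm (Φ y)]
          exact (hbnd y x h).trans (le_abs_self _)
      have hΦ0 : Tendsto (fun y => |Φ y - Φ x|) (𝓝 x) (𝓝 0) := by
        have : Tendsto (fun y => Φ y - Φ x) (𝓝 x) (𝓝 (Φ x - Φ x)) :=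
          (hΦcont.tendsto x).sub tendsto_const_nhds
        rw [sub_self] at this
        simpa using this.abs
      exact squeeze_zero (fun y => abs_nonneg _) hb hΦ0
    rw [ContinuousAt, tendsto_iff_dist_tendsto_zero]
    simpa [Real.dist_eq] using key
  have hm1 : Monotone (fun y => Φ y + f y) := by
    intro u v huv
    have := hbnd u v huv
    have := abs_le.1 this
    simp only; linarith [this.1]
  have hm2 : Monotone (fun y => Φ y - f y) := by
    intro u v huv
    have := abs_le.1 (hbnd u v huv)
    simp only; linarith [this.2]
  set M₁ := ofMonoCont _ hm1 (hΦcont.add hfcont) with hM₁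
  set M₂ := ofMonoCont _ hm2 (hΦcont.sub hfcont) with hM₂
  set ν : Measure ℝ := volume.withDensity (fun x => ENNReal.ofReal (2 * w x)) with hν
  haveI : IsLocallyFiniteMeasure (M₁.measure + M₂.measure) := by
    refine ⟨fun x => ?_⟩
    obtain ⟨U, hU, h1⟩ := M₁.measure.finiteAt_nhds x
    obtain ⟨V, hV, h2⟩ := M₂.measure.finiteAt_nhds x
    refine ⟨U ∩ V, inter_mem hU hV, ?_⟩
    rw [Measure.add_apply]
    exact ENNReal.add_lt_top.2 ⟨lt_of_le_of_lt (measure_mono (inter_subset_left)) h1,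
      lt_of_le_of_lt (measure_mono (inter_subset_right)) h2⟩
  have hsum : M₁.measure + M₂.measure = ν := by
    refine Measure.ext_of_Ioc _ _ (fun a b hab => ?_)
    rw [Measure.add_apply, M₁.measure_Ioc, M₂.measure_Ioc]
    have hab' := hab.le
    have h2w : ν (Ioc a b) = ENNReal.ofReal (∫ t in Ioc a b, 2 * w t) := by
      rw [hν, withDensity_apply _ measurableSet_Ioc,
        ← ofReal_integral_eq_lintegral_ofReal
          (((hInt a b).1.const_mul 2))
          (Filter.Eventually.of_forall (fun t => by simp only [Pi.zero_apply]; linarith [hw0 t]))]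
    rw [h2w]
    have hio : ∫ t in Ioc a b, 2 * w t = 2 * (Φ b - Φ a) := by
      rw [hΦadd a b, ← intervalIntegral.integral_of_le hab', intervalIntegral.integral_const_mul]
    rw [hio]
    have n1 : 0 ≤ (Φ b + f b) - (Φ a + f a) := sub_nonneg.2 (hm1 hab')
    have n2 : 0 ≤ (Φ b - f b) - (Φ a - f a) := sub_nonneg.2 (hm2 hab')
    have e1 : (M₁ b : ℝ) - M₁ a = (Φ b + f b) - (Φ a + f a) := rfl
    have e2 : (M₂ b : ℝ) - M₂ a = (Φ b - f b) - (Φ a - f a) := rfl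
    rw [e1, e2, ← ENNReal.ofReal_add n1 n2]
    congr 1; ring
  have hle1 : M₁.measure ≤ ν := hsum ▸ Measure.le_add_right le_rfl
  have hle2 : M₂.measure ≤ ν := hsum ▸ Measure.le_add_left le_rfl
  have hac1 : M₁.measure ≪ volume :=
    (Measure.absolutelyContinuous_of_le hle1).trans (withDensity_absolutelyContinuous _ _)
  have hac2 : M₂.measure ≪ volume :=
    (Measure.absolutelyContinuous_of_le hle2).trans (withDensity_absolutelyContinuous _ _)
  set d₁ : ℝ → ℝ := fun t => (M₁.measure.rnDeriv volume t).toReal with hd₁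
  set d₂ : ℝ → ℝ := fun t => (M₂.measure.rnDeriv volume t).toReal with hd₂
  refine ⟨fun t => (d₁ t - d₂ t) / 2, ?_, ?_, ?_⟩
  · filter_upwards [M₁.ae_hasDerivAt, M₂.ae_hasDerivAt] with x h1 h2
    have h3 : HasDerivAt (fun y => (M₁ y - M₂ y) / 2) ((d₁ x - d₂ x) / 2) x :=
      (h1.sub h2).div_const 2
    apply h3.congr_of_eventuallyEq
    apply Filter.Eventually.of_forall
    intro y
    show f y = ((Φ y + f y) - (Φ y - f y)) / 2
    ring
  · have hcore : ∀ x y : ℝ, x ≤ y → f y = f x + ∫ t in x..y, (d₁ t - d₂ t) / 2 := by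
      intro x y hxy
      have i1 := stieltjes_ftc M₁ hac1 x y hxy
      have i2 := stieltjes_ftc M₂ hac2 x y hxy
      have e1 : (M₁ y : ℝ) - M₁ x = (Φ y + f y) - (Φ x + f x) := rfl
      have e2 : (M₂ y : ℝ) - M₂ x = (Φ y - f y) - (Φ x - f x) := rfl
      rw [e1] at i1; rw [e2] at i2
      have j1 := stieltjes_intervalIntegrable M₁ x y
      have j2 := stieltjes_intervalIntegrable M₂ x y
      have : ∫ t in x..y, (d₁ t - d₂ t) / 2 = ((∫ t in x..y, d₁ t) - ∫ t in x..y, d₂ t) / 2 := by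
        rw [intervalIntegral.integral_div, intervalIntegral.integral_sub j1 j2]
      rw [this, ← i1, ← i2]; ring
    intro x y
    rcases le_total x y with h | h
    · exact hcore x y h
    · have h2 := hcore y x h
      have hsymm : ∫ t in x..y, (d₁ t - d₂ t) / 2 = - ∫ t in y..x, (d₁ t - d₂ t) / 2 :=
        intervalIntegral.integral_symm y x
      show f y = f x + ∫ t in x..y, (d₁ t - d₂ t) / 2
      rw [hsymm]; linarith
  · intro x y
    exact ((stieltjes_intervalIntegrable M₁ x y).sub (stieltjes_intervalIntegrable M₂ x y)).div_const 2

lemma countable_isolated (B : Set ℝ) : {x | x ∈ B ∧ 𝓝[B \ {x}] x = ⊥}.Countable := by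
  have key : {x | x ∈ B ∧ 𝓝[B \ {x}] x = ⊥} ⊆
      ⋃ p : ℚ × ℚ, {x | x ∈ B ∩ Ioo (p.1 : ℝ) p.2 ∧ B ∩ Ioo (p.1 : ℝ) p.2 ⊆ {x}} := by
    rintro x ⟨hxB, hbot⟩
    have : (∅ : Set ℝ) ∈ 𝓝[B \ {x}] x := by rw [hbot]; exact mem_bot
    rw [mem_nhdsWithin] at this
    obtain ⟨U, hUopen, hxU, hsub⟩ := this
    obtain ⟨ε, hε, hball⟩ := Metric.isOpen_iff.1 hUopen x hxU
    obtain ⟨p, hp1, hp2⟩ := exists_rat_btwn (show x - ε < x by linarith)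
    obtain ⟨q, hq1, hq2⟩ := exists_rat_btwn (show x < x + ε by linarith)
    refine mem_iUnion.2 ⟨(p, q), ⟨⟨hxB, hp2, hq1⟩, ?_⟩⟩
    rintro y ⟨hyB, hy1, hy2⟩
    by_contra hne
    have hyU : y ∈ U := by
      apply hball
      rw [Metric.mem_ball, Real.dist_eq, abs_lt]
      constructor <;> [linarith; linarith]
    exact (hsub ⟨hyU, hyB, hne⟩)
  apply Set.Countable.mono key
  apply Set.countable_iUnion
  intro p
  apply Set.Subsingleton.countable
  rintro y ⟨hy, _⟩ z ⟨_, hzs⟩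
  exact hzs hy

/-- a.e. on a level set of `f`, any a.e. derivative vanishes. -/
lemma level_deriv_zero (f : ℝ → ℝ) (c : ℝ) (e : ℝ → ℝ)
    (hd : ∀ᵐ x, HasDerivAt f (e x) x) :
    ∀ᵐ x, f x = c → e x = 0 := by
  set B : Set ℝ := f ⁻¹' {c} with hB
  have hcnt := countable_isolated B
  filter_upwards [hd, hcnt.ae_notMem volume] with x hx hxI
  intro hfx
  have hxB : x ∈ B := by simpa [hB] using hfx
  have hne : (𝓝[B \ {x}] x).NeBot := by
    rcases eq_or_ne (𝓝[B \ {x}] x) ⊥ with h | h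
    · exact absurd ⟨hxB, h⟩ hxI
    · exact ⟨h⟩
  have hs := hasDerivAt_iff_tendsto_slope.1 hx
  have h1 : Tendsto (slope f x) (𝓝[B \ {x}] x) (𝓝 (e x)) :=
    hs.mono_left (nhdsWithin_mono _ (fun y hy => hy.2))
  have h2 : Tendsto (slope f x) (𝓝[B \ {x}] x) (𝓝 0) := by
    apply Tendsto.congr' _ tendsto_const_nhds
    filter_upwards [self_mem_nhdsWithin] with y hy
    have hfy : f y = c := hy.1
    simp [slope_def_field, hfy, hfx]
  exact tendsto_nhds_unique h1 h2

lemma constancy_left (θ : ℝ → ℝ) (hcont : Continuous θ)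
    (hftc : ∀ x y : ℝ, θ y = θ x + ∫ t in x..y, deriv θ t)
    (U : Set ℝ) (hU : IsOpen U)
    (hz : ∀ᵐ t, θ t ∈ U → deriv θ t = 0)
    (x₀ : ℝ) (hx₀ : θ x₀ ∈ U) :
    ∀ y ≤ x₀, θ y = θ x₀ := by
  set J : Set ℝ := {y | y ≤ x₀ ∧ ∀ t ∈ Icc y x₀, θ t ∈ U} with hJ
  have hJconst : ∀ y ∈ J, θ y = θ x₀ := by
    rintro y ⟨hy, hyU⟩
    have h0 : (∫ t in y..x₀, deriv θ t) = 0 := by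
      rw [intervalIntegral.integral_of_le hy]
      apply MeasureTheory.integral_eq_zero_of_ae
      filter_upwards [ae_restrict_mem measurableSet_Ioc,
        (ae_restrict_of_ae hz : ∀ᵐ t ∂(volume.restrict (Ioc y x₀)), θ t ∈ U → deriv θ t = 0)]
        with t ht h
      exact h (hyU t ⟨ht.1.le, ht.2⟩)
    have := hftc y x₀
    rw [h0] at this; linarith
  have hx₀J : x₀ ∈ J := by
    refine ⟨le_rfl, fun t ht => ?_⟩
    have : t = x₀ := le_antisymm ht.2 ht.1
    rwa [this]
  have hup : ∀ y ∈ J, ∀ z, y ≤ z → z ≤ x₀ → z ∈ J := by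
    rintro y ⟨hy, hyU⟩ z hyz hzx
    exact ⟨hzx, fun t ht => hyU t ⟨hyz.trans ht.1, ht.2⟩⟩
  by_cases hbdd : BddBelow J
  · exfalso
    set α := sInf J with hα
    have hαle : α ≤ x₀ := csInf_le hbdd hx₀J
    have hJoo : ∀ t, α < t → t ≤ x₀ → t ∈ J := by
      intro t hαt htx
      obtain ⟨y, hyJ, hyt⟩ := exists_lt_of_csInf_lt ⟨x₀, hx₀J⟩ hαt
      exact hup y hyJ t hyt.le htx
    have hconst2 : ∀ t, α < t → t ≤ x₀ → θ t = θ x₀ := fun t h1 h2 => hJconst _ (hJoo t h1 h2)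
    have hθα : θ α = θ x₀ := by
      rcases eq_or_lt_of_le hαle with heq | hlt
      · rw [heq]
      · have heqon : EqOn θ (fun _ => θ x₀) (Ioo α x₀) := fun t ht => hconst2 t ht.1 ht.2.le
        have hcl : EqOn θ (fun _ => θ x₀) (closure (Ioo α x₀)) :=
          heqon.closure hcont continuous_const
        have : α ∈ closure (Ioo α x₀) := by
          rw [closure_Ioo hlt.ne]; exact ⟨le_rfl, hαle⟩
        exact hcl this
    have hαU : θ α ∈ U := hθα ▸ hx₀
    have hnb : θ ⁻¹' U ∈ 𝓝 α := hcont.continuousAt.preimage_mem_nhds (hU.mem_nhds hαU)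
    obtain ⟨ε, hε, hball⟩ := Metric.mem_nhds_iff.1 hnb
    have hy'J : α - ε / 2 ∈ J := by
      refine ⟨by linarith, fun t ht => ?_⟩
      rcases le_or_gt t α with h | h
      · apply hball
        rw [Metric.mem_ball, Real.dist_eq, abs_lt]
        constructor <;> [linarith [ht.1]; linarith]
      · exact ((hJoo t h ht.2).2) t ⟨le_rfl, ht.2⟩
    have := csInf_le hbdd hy'J
    rw [← hα] at this
    linarith
  · intro y hy
    obtain ⟨z, hzJ, hzy⟩ := not_bddBelow_iff.1 hbdd y
    exact hJconst y (hup z hzJ y hzy.le hy)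


/-- `θ ∈ 𝒲` : locally absolutely continuous with `θ' ∈ L²` and `cos θ ∈ L²`. -/
def MemScrW (θ : ℝ → ℝ) : Prop :=
  (∀ x y : ℝ, θ y = θ x + ∫ t in x..y, deriv θ t) ∧
  MemLp (deriv θ) 2 volume ∧
  MemLp (fun x => Real.cos (θ x)) 2 volume

/-- The energy `E_s(θ) = (1/2) ∫ (θ'² + cos²θ) s`. -/
def Es (s θ : ℝ → ℝ) : ℝ :=
  (1/2) * ∫ x : ℝ, ((deriv θ x)^2 + (Real.cos (θ x))^2) * s x

/-- A notch profile. -/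
def NotchProfile (s₀ a : ℝ) (s : ℝ → ℝ) : Prop :=
  (∃ K : NNReal, LipschitzWith K s) ∧ (∀ x, s₀ ≤ s x) ∧ (∀ x, s x ≤ 1) ∧
  (∀ x : ℝ, a < |x| → s x = 1)

/-- `(s θ')' + s cos θ sin θ = 0` in the sense of distributions on `ℝ`. -/
def IsCriticalPoint (s θ : ℝ → ℝ) : Prop :=
  ∀ φ : ℝ → ℝ, ContDiff ℝ (⊤ : ℕ∞) φ → HasCompactSupport φ →
    ∫ x : ℝ, s x * deriv θ x * deriv φ x
      = ∫ x : ℝ, s x * Real.cos (θ x) * Real.sin (θ x) * φ x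

/-- `θ ∈ 𝒲_≠`. -/
def MemWneq (θ : ℝ → ℝ) : Prop :=
  MemScrW θ ∧ Tendsto θ atBot (nhds (-(π/2))) ∧
  ∃ k : ℕ, Tendsto θ atTop (nhds (π/2 + 2*π*(k:ℝ)))

/-- `θ ∈ W`. -/
def MemW (θ : ℝ → ℝ) : Prop :=
  MemWneq θ ∧ ∀ x : ℝ, θ x ∈ Set.Icc (-(π/2)) (π/2)

/-- truncation by the threshold map `T(x) = max(-π/2, min(x, π/2))`
sends `𝒲_≠` to `W` and does not increase the energy; the inequality is strict
whenever `θ ∉ W`. -/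
theorem truncation_decreases_energy (s₀ a : ℝ) (s : ℝ → ℝ)
    (hs₀ : 0 < s₀) (hs₀1 : s₀ < 1) (ha : 0 < a)
    (hnotch : NotchProfile s₀ a s)
    (θ : ℝ → ℝ) (hθ : MemWneq θ) :
    MemW (fun x => max (-(π/2)) (min (θ x) (π/2))) ∧
    Es s (fun x => max (-(π/2)) (min (θ x) (π/2))) ≤ Es s θ ∧
    (¬ MemW θ → Es s (fun x => max (-(π/2)) (min (θ x) (π/2))) < Es s θ) := by
  obtain ⟨⟨hftc, hmem2, hmemcos⟩, hbot, k, htop⟩ := hθ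
  have hπ : (0:ℝ) < π := pi_pos
  obtain ⟨⟨K, hK⟩, hs_lb, hs_ub, _⟩ := hnotch
  set g : ℝ → ℝ := fun x => max (-(π/2)) (min (θ x) (π/2)) with hg
  -- basic continuity facts
  have hloc : LocallyIntegrable (deriv θ) volume := hmem2.locallyIntegrable one_le_two
  have hIntd : ∀ u v : ℝ, IntervalIntegrable (deriv θ) volume u v := fun u v =>
    (hloc.integrableOn_isCompact isCompact_uIcc).intervalIntegrable
  have hθcont : Continuous θ := by
    have h1 : Continuous fun y => θ 0 + ∫ t in (0:ℝ)..y, deriv θ t :=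
      continuous_const.add (intervalIntegral.continuous_primitive (fun u v => hIntd u v) 0)
    have : θ = fun y => θ 0 + ∫ t in (0:ℝ)..y, deriv θ t := funext (fun y => hftc 0 y)
    rw [this]; exact h1
  have hgcont : Continuous g := continuous_const.max (hθcont.min continuous_const)
  have hTlip : ∀ p q : ℝ, |max (-(π/2)) (min p (π/2)) - max (-(π/2)) (min q (π/2))| ≤ |p - q| := by
    intro p q
    rw [max_comm (-(π/2)) (min p (π/2)), max_comm (-(π/2)) (min q (π/2))]
    refine (abs_max_sub_max_le_abs _ _ _).trans ?_
    refine le_trans (abs_min_sub_min_le_max p (π/2) q (π/2)) ?_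
    simp
  set w : ℝ → ℝ := fun t => |deriv θ t| with hw
  have hIntw : ∀ u v : ℝ, IntervalIntegrable w volume u v := fun u v =>
    ((hloc.integrableOn_isCompact isCompact_uIcc).intervalIntegrable).abs
  have habsθ : ∀ u v : ℝ, u ≤ v → |θ v - θ u| ≤ ∫ t in u..v, w t := by
    intro u v huv
    have h1 : θ v - θ u = ∫ t in u..v, deriv θ t := by linarith [hftc u v]
    rw [h1]
    exact intervalIntegral.abs_integral_le_integral_abs huv
  obtain ⟨dθ, hdθ, -, -⟩ := key_ftc w θ hIntw (fun x => abs_nonneg _) habsθ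
  have haeθ : ∀ᵐ x, HasDerivAt θ (deriv θ x) x := by
    filter_upwards [hdθ] with x hx
    exact hx.deriv ▸ hx
  obtain ⟨dg, hdg, hftcg, -⟩ := key_ftc w g hIntw (fun x => abs_nonneg _)
    (fun u v huv => le_trans (hTlip (θ v) (θ u)) (habsθ u v huv))
  set h : ℝ → ℝ := fun x => if -(π/2) < θ x ∧ θ x < π/2 then deriv θ x else 0 with hh
  -- the key pointwise derivative computation
  have step2 : ∀ᵐ x, HasDerivAt g (h x) x := by
    have hbdy : ∀ x : ℝ, HasDerivAt θ 0 x → HasDerivAt g 0 x := by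
      intro x hx0
      rw [hasDerivAt_iff_tendsto]
      have key : Tendsto (fun y => |y - x|⁻¹ * |θ y - θ x|) (𝓝 x) (𝓝 0) := by
        have := hasDerivAt_iff_tendsto.1 hx0
        simpa [Real.norm_eq_abs] using this
      apply squeeze_zero (fun y => by positivity) ?_ key
      intro y
      have : ‖y - x‖⁻¹ * ‖g y - g x - (y - x) • (0:ℝ)‖ = |y - x|⁻¹ * |g y - g x| := by
        simp [Real.norm_eq_abs]
      rw [this]
      exact mul_le_mul_of_nonneg_left (hTlip (θ y) (θ x)) (by positivity)
    filter_upwards [haeθ, level_deriv_zero θ (π/2) (deriv θ) haeθ,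
      level_deriv_zero θ (-(π/2)) (deriv θ) haeθ] with x hx hp hm
    rcases lt_trichotomy (θ x) (π/2) with hlt | heq | hgt
    · rcases lt_trichotomy (-(π/2)) (θ x) with hlt2 | heq2 | hgt2
      · have hxE : -(π/2) < θ x ∧ θ x < π/2 := ⟨hlt2, hlt⟩
        have hopen : IsOpen {y : ℝ | -(π/2) < θ y ∧ θ y < π/2} := by
          have he : {y : ℝ | -(π/2) < θ y ∧ θ y < π/2} = θ ⁻¹' (Ioo (-(π/2)) (π/2)) := rfl
          rw [he]; exact isOpen_Ioo.preimage hθcont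
        have hev : g =ᶠ[𝓝 x] θ := by
          filter_upwards [hopen.mem_nhds hxE] with y hy
          show max (-(π/2)) (min (θ y) (π/2)) = θ y
          rw [min_eq_left hy.2.le, max_eq_right hy.1.le]
        have hval : h x = deriv θ x := if_pos hxE
        rw [hval]
        exact hx.congr_of_eventuallyEq hev
      · have hd0 : deriv θ x = 0 := hm heq2.symm
        have hval : h x = 0 := if_neg (by intro hc; exact absurd heq2.symm (ne_of_lt hc.1).symm)
        rw [hval]
        exact hbdy x (hd0 ▸ hx)
      · have hopen : IsOpen {y : ℝ | θ y < -(π/2)} := isOpen_Iio.preimage hθcont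
        have hev : g =ᶠ[𝓝 x] (fun _ => -(π/2)) := by
          filter_upwards [hopen.mem_nhds hgt2] with y hy
          show max (-(π/2)) (min (θ y) (π/2)) = -(π/2)
          rw [min_eq_left (by linarith [hy]), max_eq_left (le_of_lt hy)]
        have hval : h x = 0 := if_neg (by intro hc; linarith [hc.1])
        rw [hval]
        exact (hasDerivAt_const x (-(π/2))).congr_of_eventuallyEq hev
    · have hd0 : deriv θ x = 0 := hp heq
      have hval : h x = 0 := if_neg (by intro hc; linarith [hc.2])
      rw [hval]
      exact hbdy x (hd0 ▸ hx)
    · have hopen : IsOpen {y : ℝ | π/2 < θ y} := isOpen_Ioi.preimage hθcont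
      have hev : g =ᶠ[𝓝 x] (fun _ => π/2) := by
        filter_upwards [hopen.mem_nhds hgt] with y hy
        show max (-(π/2)) (min (θ y) (π/2)) = π/2
        rw [min_eq_right (le_of_lt hy), max_eq_right (by linarith)]
      have hval : h x = 0 := if_neg (by intro hc; linarith [hc.2])
      rw [hval]
      exact (hasDerivAt_const x (π/2)).congr_of_eventuallyEq hev
  have hderivg : deriv g =ᵐ[volume] h := by
    filter_upwards [step2] with x hx; exact hx.deriv
  -- fundamental theorem for g with deriv g
  have hftcg' : ∀ x y : ℝ, g y = g x + ∫ t in x..y, deriv g t := by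
    intro x y
    rw [hftcg x y]
    congr 1
    apply intervalIntegral.integral_congr_ae
    filter_upwards [hdg] with t ht _
    exact ht.deriv.symm
  -- MemLp facts for g
  have hmemg2 : MemLp (deriv g) 2 volume := by
    apply hmem2.norm.mono' (measurable_deriv g).aestronglyMeasurable
    filter_upwards [hderivg] with x hx
    rw [hx, hh]
    simp only
    split_ifs with hcond
    · exact le_rfl
    · simp [Real.norm_eq_abs]
  have hcosle : ∀ x, ‖Real.cos (g x)‖ ≤ ‖Real.cos (θ x)‖ := by
    intro x
    by_cases h1 : θ x < -(π/2)
    · have hgx : g x = -(π/2) := by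
        show max (-(π/2)) (min (θ x) (π/2)) = -(π/2)
        rw [min_eq_left (by linarith), max_eq_left (le_of_lt h1)]
      rw [hgx]
      simp [Real.cos_pi_div_two]
    · by_cases h2 : π/2 < θ x
      · have hgx : g x = π/2 := by
          show max (-(π/2)) (min (θ x) (π/2)) = π/2
          rw [min_eq_right (le_of_lt h2), max_eq_right (by linarith)]
        rw [hgx]
        simp [Real.cos_pi_div_two]
      · push_neg at h1 h2
        have hgx : g x = θ x := by
          show max (-(π/2)) (min (θ x) (π/2)) = θ x
          rw [min_eq_left h2, max_eq_right h1]
        rw [hgx]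
  have hmemcosg : MemLp (fun x => Real.cos (g x)) 2 volume :=
    hmemcos.norm.mono' ((Real.continuous_cos.comp hgcont).aestronglyMeasurable)
      (Eventually.of_forall hcosle)
  -- limits
  have hTc : Continuous (fun u : ℝ => max (-(π/2)) (min u (π/2))) :=
    continuous_const.max (continuous_id.min continuous_const)
  have hgbot : Tendsto g atBot (𝓝 (-(π/2))) := by
    have h1 := (hTc.tendsto (-(π/2))).comp hbot
    have hval : max (-(π/2)) (min (-(π/2)) (π/2)) = -(π/2) := by
      rw [min_eq_left (by linarith), max_self]
    rw [hval] at h1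
    exact h1.congr (fun y => rfl)
  have hgtop : Tendsto g atTop (𝓝 (π/2)) := by
    have h1 := (hTc.tendsto (π/2 + 2*π*(k:ℝ))).comp htop
    have hk0 : (0:ℝ) ≤ 2*π*(k:ℝ) := by positivity
    have hval : max (-(π/2)) (min (π/2 + 2*π*(k:ℝ)) (π/2)) = π/2 := by
      rw [min_eq_right (by linarith), max_eq_right (by linarith)]
    rw [hval] at h1
    exact h1.congr (fun y => rfl)
  have hgmem : ∀ x, g x ∈ Set.Icc (-(π/2)) (π/2) :=
    fun x => ⟨le_max_left _ _, max_le (by linarith) (min_le_right _ _)⟩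
  -- energy comparison
  set Fθ : ℝ → ℝ := fun x => ((deriv θ x)^2 + (Real.cos (θ x))^2) * s x with hFθdef
  set Fg : ℝ → ℝ := fun x => ((deriv g x)^2 + (Real.cos (g x))^2) * s x with hFgdef
  have hscont : Continuous s := hK.continuous
  have hs0 : ∀ x, 0 ≤ s x := fun x => (le_of_lt hs₀).trans (hs_lb x)
  have hsabs : ∀ x, ‖s x‖ ≤ 1 := fun x => by
    rw [Real.norm_eq_abs, abs_of_nonneg (hs0 x)]; exact hs_ub x
  have hIntθbase : Integrable (fun x => (deriv θ x)^2 + (Real.cos (θ x))^2) volume :=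
    hmem2.integrable_sq.add hmemcos.integrable_sq
  have hIntθ : Integrable Fθ volume := by
    have := hIntθbase.bdd_mul hscont.aestronglyMeasurable (Eventually.of_forall hsabs)
    apply this.congr
    filter_upwards with x
    show s x * _ = _
    ring
  have hFgnn : ∀ x, 0 ≤ Fg x := fun x => mul_nonneg (by positivity) (hs0 x)
  have hcosg0 : ∀ x, ¬(-(π/2) < θ x ∧ θ x < π/2) → Real.cos (g x) = 0 := by
    intro x hcond
    rcases not_and_or.1 hcond with h1 | h2
    · push_neg at h1
      have hgx : g x = -(π/2) := by
        show max (-(π/2)) (min (θ x) (π/2)) = -(π/2)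
        rw [min_eq_left (by linarith), max_eq_left h1]
      rw [hgx]
      simp [Real.cos_pi_div_two]
    · push_neg at h2
      have hgx : g x = π/2 := by
        show max (-(π/2)) (min (θ x) (π/2)) = π/2
        rw [min_eq_right h2, max_eq_right (by linarith)]
      rw [hgx, Real.cos_pi_div_two]
  have hFle : ∀ᵐ x, Fg x ≤ Fθ x := by
    filter_upwards [hderivg] with x hx
    by_cases hcond : -(π/2) < θ x ∧ θ x < π/2
    · have hgx : g x = θ x := by
        show max (-(π/2)) (min (θ x) (π/2)) = θ x
        rw [min_eq_left hcond.2.le, max_eq_right hcond.1.le]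
      have hhx : h x = deriv θ x := if_pos hcond
      show ((deriv g x)^2 + (Real.cos (g x))^2) * s x ≤ _
      rw [hx, hhx, hgx]
    · have hhx : h x = 0 := if_neg hcond
      have hzero : Fg x = 0 := by
        show ((deriv g x)^2 + (Real.cos (g x))^2) * s x = 0
        rw [hx, hhx, hcosg0 x hcond]
        ring
      rw [hzero]
      exact mul_nonneg (by positivity) (hs0 x)
  have hIntg : Integrable Fg volume := by
    apply hIntθ.mono'
    · exact ((((measurable_deriv g).pow_const 2).add
        ((Real.measurable_cos.comp hgcont.measurable).pow_const 2)).mul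
        hscont.measurable).aestronglyMeasurable
    · filter_upwards [hFle] with x hx
      rw [Real.norm_eq_abs, abs_of_nonneg (hFgnn x)]
      exact hx
  have hle_int : ∫ x, Fg x ≤ ∫ x, Fθ x := integral_mono_ae hIntg hIntθ hFle
  have hEsg : Es s g = (1/2 : ℝ) * ∫ x, Fg x := rfl
  have hEsθ : Es s θ = (1/2 : ℝ) * ∫ x, Fθ x := rfl
  refine ⟨⟨⟨⟨hftcg', hmemg2, hmemcosg⟩, hgbot, 0, ?_⟩, hgmem⟩, ?_, ?_⟩
  · have hv : π/2 + 2*π*((0:ℕ):ℝ) = π/2 := by norm_num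
    rw [hv]
    exact hgtop
  · rw [hEsg, hEsθ]
    linarith
  · intro hnW
    have hx₀ : ∃ x₀, θ x₀ ∉ Set.Icc (-(π/2)) (π/2) := by
      by_contra hcon
      push_neg at hcon
      exact hnW ⟨⟨⟨hftc, hmem2, hmemcos⟩, hbot, k, htop⟩, hcon⟩
    obtain ⟨x₀, hx₀⟩ := hx₀
    rw [hEsg, hEsθ]
    by_contra hnlt
    push_neg at hnlt
    have heq : ∫ x, Fg x = ∫ x, Fθ x := le_antisymm hle_int (by linarith)
    have hsub0 : ∫ x, (Fθ x - Fg x) = 0 := by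
      rw [integral_sub hIntθ hIntg]; linarith
    have hae0 : (fun x => Fθ x - Fg x) =ᵐ[volume] 0 := by
      refine (integral_eq_zero_iff_of_nonneg_ae ?_ (hIntθ.sub hIntg)).1 hsub0
      filter_upwards [hFle] with x hx
      simpa using sub_nonneg.2 hx
    have hz : ∀ᵐ t, π/2 < |θ t| → deriv θ t = 0 := by
      filter_upwards [hae0, hderivg] with x h0 hd
      intro habs
      have hcond : ¬(-(π/2) < θ x ∧ θ x < π/2) := by
        rintro ⟨ha1, ha2⟩
        have : |θ x| < π/2 := abs_lt.2 ⟨by linarith, ha2⟩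
        linarith
      have hhx : h x = 0 := if_neg hcond
      have hFgx : Fg x = 0 := by
        show ((deriv g x)^2 + (Real.cos (g x))^2) * s x = 0
        rw [hd, hhx, hcosg0 x hcond]; ring
      have h0' : Fθ x - Fg x = 0 := h0
      have hFθx : Fθ x = 0 := by rw [hFgx] at h0'; linarith
      have hbase : (deriv θ x)^2 + (Real.cos (θ x))^2 = 0 := by
        rcases mul_eq_zero.1 hFθx with hb | hb
        · exact hb
        · exfalso; have := hs_lb x; linarith
      have : (deriv θ x)^2 = 0 := by nlinarith [sq_nonneg (deriv θ x), sq_nonneg (Real.cos (θ x))]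
      exact pow_eq_zero_iff two_ne_zero |>.1 this
    rw [Set.mem_Icc] at hx₀
    rcases not_and_or.1 hx₀ with h1 | h2
    · push_neg at h1
      have hconst := constancy_left θ hθcont hftc (Iio (-(π/2))) isOpen_Iio
        (by filter_upwards [hz] with t ht hmem
            exact ht (lt_abs.2 (Or.inr (by simp only [mem_Iio] at hmem; linarith))))
        x₀ h1
      have htb : Tendsto θ atBot (𝓝 (θ x₀)) := by
        apply Tendsto.congr' _ tendsto_const_nhds
        filter_upwards [eventually_le_atBot x₀] with y hy
        exact (hconst y hy).symm
      have := tendsto_nhds_unique htb hbot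
      linarith
    · push_neg at h2
      have hconst := constancy_left θ hθcont hftc (Ioi (π/2)) isOpen_Ioi
        (by filter_upwards [hz] with t ht hmem
            exact ht (lt_abs.2 (Or.inl hmem)))
        x₀ h2
      have htb : Tendsto θ atBot (𝓝 (θ x₀)) := by
        apply Tendsto.congr' _ tendsto_const_nhds
        filter_upwards [eventually_le_atBot x₀] with y hy
        exact (hconst y hy).symm
      have := tendsto_nhds_unique htb hbot
      linarith
end
end

section
/- Let s be a notch profile and x₀ ∈ ℝ. The set 𝒥⁻_{x₀} of functions ψ ∈ L²(−∞, x₀) ∩ H¹_loc(−∞, x₀) with 0 < ψ(x) < 1 for a.e. x < x₀ and ψ′²/(1 − ψ²) ∈ L¹(−∞, x₀) is convex, and the functional 𝓔⁻_{x₀}(ψ) = (1/2) ∫_{−∞}^{x₀} ( ψ′(x)²/(1 − ψ(x)²) + ψ(x)² ) s(x) dx is convex on 𝒥⁻_{x₀}. The analogous statements hold for 𝒥⁺_{x₀} and 𝓔⁺_{x₀} on (x₀, ∞). -/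
open MeasureTheory Real Filter

noncomputable section

open Set intervalIntegral Metric Topology

/-- `ψ ∈ 𝒥_I` : `ψ ∈ L²(I) ∩ H¹_loc(I)`, `0 < ψ < 1` a.e. on `I`, and
`ψ'² / (1 - ψ²) ∈ L¹(I)`. -/
def MemJ (I : Set ℝ) (ψ : ℝ → ℝ) : Prop :=
  MemLp ψ 2 (volume.restrict I) ∧
  (∀ x ∈ I, ∀ y ∈ I, ψ y = ψ x + ∫ t in x..y, deriv ψ t) ∧
  MeasureTheory.LocallyIntegrableOn (fun x => (deriv ψ x)^2) I ∧
  (∀ᵐ x ∂(volume.restrict I), ψ x ∈ Set.Ioo (0:ℝ) 1) ∧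
  IntegrableOn (fun x => (deriv ψ x)^2 / (1 - (ψ x)^2)) I

/-- The partial functional `𝓔_I(ψ) = (1/2) ∫_I (ψ'²/(1-ψ²) + ψ²) s`. -/
def EJ (s : ℝ → ℝ) (I : Set ℝ) (ψ : ℝ → ℝ) : ℝ :=
  (1/2) * ∫ x in I, ((deriv ψ x)^2 / (1 - (ψ x)^2) + (ψ x)^2) * s x


lemma ae_hasDerivAt_primitive (f : ℝ → ℝ) (hf : Integrable f) (c : ℝ) :
    ∀ᵐ x : ℝ, HasDerivAt (fun y => ∫ t in c..y, f t) (f x) x := by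
  filter_upwards [IsUnifLocDoublingMeasure.ae_tendsto_average_norm_sub volume
    hf.locallyIntegrable 1] with x hx
  have hδ : Tendsto (fun y : ℝ => |y - x|) (𝓝[≠] x) (𝓝[>] 0) := by
    rw [tendsto_nhdsWithin_iff]
    constructor
    · have h1 : Tendsto (fun y : ℝ => |y - x|) (𝓝 x) (𝓝 |x - x|) :=
        ((continuous_id.sub continuous_const).abs).tendsto x
      simpa using h1.mono_left nhdsWithin_le_nhds
    · filter_upwards [self_mem_nhdsWithin] with y hy
      simp only [Set.mem_compl_iff, Set.mem_singleton_iff] at hy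
      simpa [abs_pos, sub_ne_zero] using hy
  have hmem : ∀ᶠ y : ℝ in 𝓝[≠] x, x ∈ Metric.closedBall x (1 * |y - x|) := by
    filter_upwards with y
    simpa using abs_nonneg (y - x)
  have havg := hx (fun _ : ℝ => x) (fun y => |y - x|) hδ hmem
  rw [hasDerivAt_iff_tendsto_slope, tendsto_iff_dist_tendsto_zero]
  apply squeeze_zero' (Eventually.of_forall fun y => dist_nonneg)
    (g := fun y => 2 * ⨍ t in Metric.closedBall x |y - x|, ‖f t - f x‖)
  · filter_upwards [self_mem_nhdsWithin] with y hy
    have hyx : y ≠ x := hy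
    have hr : 0 < |y - x| := abs_pos.2 (sub_ne_zero.2 hyx)
    have hii : IntervalIntegrable f volume x y := hf.intervalIntegrable
    have hFsub : (∫ t in c..y, f t) - ∫ t in c..x, f t = ∫ t in x..y, f t :=
      integral_interval_sub_left hf.intervalIntegrable hf.intervalIntegrable
    have hslope : slope (fun y => ∫ t in c..y, f t) x y
        = (∫ t in x..y, f t) / (y - x) := by
      rw [slope_def_field, hFsub]
    have hsub : (∫ t in x..y, f t) - (y - x) * f x = ∫ t in x..y, (f t - f x) := by
      rw [intervalIntegral.integral_sub hii (intervalIntegrable_const)]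
      simp [smul_eq_mul]
    have h1 : ‖∫ t in x..y, (f t - f x)‖ ≤ ∫ t in Set.uIoc x y, ‖f t - f x‖ :=
      intervalIntegral.norm_integral_le_integral_norm_uIoc
    have hcb : Set.uIoc x y ⊆ Metric.closedBall x |y - x| := by
      intro t ht
      rw [Set.mem_uIoc] at ht
      rw [Metric.mem_closedBall, Real.dist_eq]
      rcases ht with ⟨h1, h2⟩ | ⟨h1, h2⟩
      · rw [abs_of_pos (by linarith), abs_of_nonneg (by linarith)]; linarith
      · have : t - x ≤ 0 := by linarith
        rw [abs_of_nonpos this, abs_of_nonpos (by linarith)]; linarith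
    have h2 : ∫ t in Set.uIoc x y, ‖f t - f x‖
        ≤ ∫ t in Metric.closedBall x |y - x|, ‖f t - f x‖ := by
      apply setIntegral_mono_set ((hf.integrableOn.sub
        (integrableOn_const measure_closedBall_lt_top.ne)).norm)
        (Eventually.of_forall fun t => norm_nonneg _) hcb.eventuallyLE
    have hvol : (volume (Metric.closedBall x |y - x|)).toReal = 2 * |y - x| := by
      rw [Real.volume_closedBall, ENNReal.toReal_ofReal (by linarith)]
    have h3 : ∫ t in Metric.closedBall x |y - x|, ‖f t - f x‖
        = 2 * |y - x| * ⨍ t in Metric.closedBall x |y - x|, ‖f t - f x‖ := by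
      rw [setAverage_eq, measureReal_def, hvol, smul_eq_mul]
      field_simp
    have havgnn : 0 ≤ ⨍ t in Metric.closedBall x |y - x|, ‖f t - f x‖ := by
      rw [setAverage_eq]
      exact smul_nonneg (by positivity) (setIntegral_nonneg measurableSet_closedBall
        fun t _ => norm_nonneg _)
    rw [Real.dist_eq, hslope]
    have key : |(∫ t in x..y, f t) / (y - x) - f x|
        = ‖∫ t in x..y, (f t - f x)‖ / |y - x| := by
      rw [Real.norm_eq_abs, ← hsub, ← abs_div]
      congr 1
      have hne : y - x ≠ 0 := sub_ne_zero.2 hyx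
      field_simp
    rw [key, div_le_iff₀ hr]
    calc ‖∫ t in x..y, (f t - f x)‖
        ≤ ∫ t in Metric.closedBall x |y - x|, ‖f t - f x‖ := le_trans h1 h2
      _ = 2 * |y - x| * ⨍ t in Metric.closedBall x |y - x|, ‖f t - f x‖ := h3
      _ = 2 * (⨍ t in Metric.closedBall x |y - x|, ‖f t - f x‖) * |y - x| := by ring
  · simpa using havg.const_mul 2

lemma locIntOn_of_sq (f : ℝ → ℝ) (hm : AEStronglyMeasurable f volume) {I : Set ℝ}
    (h : LocallyIntegrableOn (fun x => (f x)^2) I volume) :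
    LocallyIntegrableOn f I volume := by
  intro x hx
  obtain ⟨t, ht, hint⟩ := h x hx
  refine ⟨t ∩ Metric.ball x 1,
    Filter.inter_mem ht (nhdsWithin_le_nhds (Metric.ball_mem_nhds x one_pos)), ?_⟩
  have h1 : IntegrableOn (fun y => 1 + (f y)^2) (t ∩ Metric.ball x 1) volume := by
    apply Integrable.add
    · exact integrableOn_const (lt_of_le_of_lt
        (measure_mono Set.inter_subset_right) measure_ball_lt_top).ne
    · exact hint.mono_set Set.inter_subset_left
  refine h1.mono' hm.restrict ?_
  filter_upwards with y
  have h2 : |f y| ≤ 1 + (f y)^2 := by nlinarith [sq_nonneg (|f y| - 1), sq_abs (f y)]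
  simpa [Real.norm_eq_abs] using h2

lemma ae_hasDerivAt_of_FTC {I : Set ℝ} (hI : IsOpen I) (hconv : Convex ℝ I)
    (ψ : ℝ → ℝ)
    (hftc : ∀ x ∈ I, ∀ y ∈ I, ψ y = ψ x + ∫ t in x..y, deriv ψ t)
    (hloc : LocallyIntegrableOn (deriv ψ) I volume) :
    ∀ᵐ x : ℝ, x ∈ I → HasDerivAt ψ (deriv ψ x) x := by
  have key : ∀ q r : ℚ, ∀ᵐ x : ℝ,
      (x ∈ Set.Ioo (q:ℝ) r ∧ Set.Icc (q:ℝ) r ⊆ I) → HasDerivAt ψ (deriv ψ x) x := by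
    intro q r
    by_cases H : ((q:ℝ) < r ∧ Set.Icc (q:ℝ) r ⊆ I)
    swap
    · filter_upwards with x hx
      exact absurd ⟨hx.1.1.trans hx.1.2, hx.2⟩ H
    obtain ⟨hqr, hsub⟩ := H
    set g : ℝ → ℝ := (Set.Ioo (q:ℝ) r).indicator (deriv ψ) with hgdef
    have hg : Integrable g := by
      rw [hgdef, integrable_indicator_iff measurableSet_Ioo]
      exact (hloc.integrableOn_compact_subset hsub isCompact_Icc).mono_set Set.Ioo_subset_Icc_self
    set c : ℝ := ((q:ℝ) + r)/2 with hcdef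
    have hc : c ∈ Set.Ioo (q:ℝ) r := by constructor <;> (rw [hcdef]; linarith)
    have hcI : c ∈ I := hsub (Set.Ioo_subset_Icc_self hc)
    filter_upwards [ae_hasDerivAt_primitive g hg c] with x hx hmem
    obtain ⟨hxIoo, -⟩ := hmem
    have heq : Set.EqOn ψ (fun y => ψ c + ∫ t in c..y, g t) (Set.Ioo (q:ℝ) r) := by
      intro y hy
      have hyI : y ∈ I := hsub (Set.Ioo_subset_Icc_self hy)
      have h1 : ψ y = ψ c + ∫ t in c..y, deriv ψ t := hftc c hcI y hyI
      have h2 : ∫ t in c..y, deriv ψ t = ∫ t in c..y, g t := by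
        apply intervalIntegral.integral_congr
        intro t ht
        have : t ∈ Set.Ioo (q:ℝ) r := Set.ordConnected_Ioo.uIcc_subset hc hy ht
        rw [hgdef, Set.indicator_of_mem this]
      rw [h1, h2]
    have hψeq : ψ =ᶠ[nhds x] (fun y => ψ c + ∫ t in c..y, g t) :=
      Filter.eventuallyEq_of_mem (isOpen_Ioo.mem_nhds hxIoo) heq
    have hD : HasDerivAt (fun y => ψ c + ∫ t in c..y, g t) (g x) x := (hx.const_add (ψ c))
    have := hD.congr_of_eventuallyEq hψeq
    rwa [hgdef, Set.indicator_of_mem hxIoo] at this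
  have hcover : ∀ x ∈ I, ∃ q r : ℚ, x ∈ Set.Ioo (q:ℝ) r ∧ Set.Icc (q:ℝ) r ⊆ I := by
    intro x hx
    obtain ⟨ε, hε, hball⟩ := Metric.isOpen_iff.1 hI x hx
    obtain ⟨q, hq1, hq2⟩ := exists_rat_btwn (show x - ε < x by linarith)
    obtain ⟨r, hr1, hr2⟩ := exists_rat_btwn (show x < x + ε by linarith)
    refine ⟨q, r, ⟨hq2, hr1⟩, fun t ht => hball ?_⟩
    rw [Metric.mem_ball, Real.dist_eq, abs_lt]
    obtain ⟨ht1, ht2⟩ := ht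
    constructor <;> linarith
  have H : ∀ᵐ x : ℝ, ∀ q r : ℚ,
      (x ∈ Set.Ioo (q:ℝ) r ∧ Set.Icc (q:ℝ) r ⊆ I) → HasDerivAt ψ (deriv ψ x) x :=
    ae_all_iff.mpr fun q => ae_all_iff.mpr fun r => key q r
  filter_upwards [H] with x hx hxI
  obtain ⟨q, r, h1, h2⟩ := hcover x hxI
  exact hx q r ⟨h1, h2⟩


lemma combo_mem_Ioo {q₀ q₁ lam : ℝ} (h₀ : q₀ ∈ Set.Ioo (0:ℝ) 1) (h₁ : q₁ ∈ Set.Ioo (0:ℝ) 1)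
    (hl0 : 0 ≤ lam) (hl1 : lam ≤ 1) : (1 - lam) * q₀ + lam * q₁ ∈ Set.Ioo (0:ℝ) 1 := by
  obtain ⟨a0, a1⟩ := h₀; obtain ⟨b0, b1⟩ := h₁
  rcases lt_or_ge lam 1 with h | h
  · constructor
    · nlinarith [mul_pos (sub_pos.2 h) a0, mul_nonneg hl0 b0.le]
    · nlinarith [mul_lt_mul_of_pos_left a1 (sub_pos.2 h), mul_le_mul_of_nonneg_left b1.le hl0]
  · have : lam = 1 := le_antisymm hl1 h
    subst this
    constructor <;> simp <;> [exact b0; exact b1]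

lemma combo_pos {u₀ u₁ lam : ℝ} (h₀ : 0 < u₀) (h₁ : 0 < u₁)
    (hl0 : 0 ≤ lam) (hl1 : lam ≤ 1) : 0 < (1-lam)*u₀ + lam*u₁ := by
  rcases lt_or_ge lam 1 with h | h
  · nlinarith [mul_pos (sub_pos.2 h) h₀, mul_nonneg hl0 h₁.le]
  · have : lam = 1 := le_antisymm hl1 h
    subst this
    nlinarith

lemma perspective_ineq {p₀ p₁ u₀ u₁ lam : ℝ} (h₀ : 0 < u₀) (h₁ : 0 < u₁)
    (hl0 : 0 ≤ lam) (hl1 : lam ≤ 1) :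
    ((1-lam)*p₀ + lam*p₁)^2 / ((1-lam)*u₀ + lam*u₁)
      ≤ (1-lam) * (p₀^2/u₀) + lam * (p₁^2/u₁) := by
  have hw : 0 < (1-lam)*u₀ + lam*u₁ := combo_pos h₀ h₁ hl0 hl1
  have hrhs : (1-lam)*(p₀^2/u₀) + lam*(p₁^2/u₁)
      = ((1-lam)*(p₀^2*u₁) + lam*(p₁^2*u₀))/(u₀*u₁) := by
    field_simp
  rw [hrhs, div_le_div_iff₀ hw (mul_pos h₀ h₁)]
  nlinarith [mul_nonneg (mul_nonneg hl0 (sub_nonneg.2 hl1)) (sq_nonneg (p₀*u₁ - p₁*u₀))]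

lemma key_ineq {p₀ p₁ q₀ q₁ lam : ℝ} (h₀ : q₀ ∈ Set.Ioo (0:ℝ) 1) (h₁ : q₁ ∈ Set.Ioo (0:ℝ) 1)
    (hl0 : 0 ≤ lam) (hl1 : lam ≤ 1) :
    ((1-lam)*p₀ + lam*p₁)^2 / (1 - ((1-lam)*q₀ + lam*q₁)^2) + ((1-lam)*q₀ + lam*q₁)^2
      ≤ (1-lam) * (p₀^2/(1-q₀^2) + q₀^2) + lam * (p₁^2/(1-q₁^2) + q₁^2) := by
  obtain ⟨a0, a1⟩ := h₀; obtain ⟨b0, b1⟩ := h₁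
  have hu₀ : 0 < 1 - q₀^2 := by nlinarith
  have hu₁ : 0 < 1 - q₁^2 := by nlinarith
  have hqc : ((1-lam)*q₀ + lam*q₁)^2 ≤ (1-lam)*q₀^2 + lam*q₁^2 := by
    nlinarith [mul_nonneg (mul_nonneg hl0 (sub_nonneg.2 hl1)) (sq_nonneg (q₀ - q₁))]
  have hw : 0 < (1-lam)*(1-q₀^2) + lam*(1-q₁^2) := combo_pos hu₀ hu₁ hl0 hl1
  have hu : (1-lam)*(1-q₀^2) + lam*(1-q₁^2) ≤ 1 - ((1-lam)*q₀ + lam*q₁)^2 := by nlinarith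
  have h1 : ((1-lam)*p₀ + lam*p₁)^2 / (1 - ((1-lam)*q₀ + lam*q₁)^2)
      ≤ ((1-lam)*p₀ + lam*p₁)^2 / ((1-lam)*(1-q₀^2) + lam*(1-q₁^2)) := by
    exact div_le_div_of_nonneg_left (sq_nonneg _) hw hu
  have h2 := perspective_ineq (p₀ := p₀) (p₁ := p₁) hu₀ hu₁ hl0 hl1
  have hr : (1-lam) * (p₀^2/(1-q₀^2) + q₀^2) + lam * (p₁^2/(1-q₁^2) + q₁^2)
      = ((1-lam) * (p₀^2/(1-q₀^2)) + lam * (p₁^2/(1-q₁^2)))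
        + ((1-lam)*q₀^2 + lam*q₁^2) := by ring
  rw [hr]
  linarith [h1, h2, hqc]

lemma memJ_convex {I : Set ℝ} (hI : IsOpen I) (hconv : Convex ℝ I)
    (s : ℝ → ℝ) (hs_cont : Continuous s) (hs0 : ∀ x, 0 ≤ s x) (hs1 : ∀ x, s x ≤ 1)
    (ψ₀ ψ₁ : ℝ → ℝ) (h₀ : MemJ I ψ₀) (h₁ : MemJ I ψ₁)
    (lam : ℝ) (hl : lam ∈ Set.Icc (0:ℝ) 1) :
    MemJ I (fun x => (1 - lam) * ψ₀ x + lam * ψ₁ x) ∧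
    EJ s I (fun x => (1 - lam) * ψ₀ x + lam * ψ₁ x)
      ≤ (1 - lam) * EJ s I ψ₀ + lam * EJ s I ψ₁ := by
  obtain ⟨hl0, hl1⟩ := hl
  obtain ⟨hL₀, hftc₀, hloc₀, hae₀, hint₀⟩ := h₀
  obtain ⟨hL₁, hftc₁, hloc₁, hae₁, hint₁⟩ := h₁
  have hmI : MeasurableSet I := hI.measurableSet
  set ψl : ℝ → ℝ := fun x => (1 - lam) * ψ₀ x + lam * ψ₁ x with hψl
  -- a.e. derivative identity
  have hli₀ : LocallyIntegrableOn (deriv ψ₀) I volume :=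
    locIntOn_of_sq _ (measurable_deriv ψ₀).aestronglyMeasurable hloc₀
  have hli₁ : LocallyIntegrableOn (deriv ψ₁) I volume :=
    locIntOn_of_sq _ (measurable_deriv ψ₁).aestronglyMeasurable hloc₁
  have hd₀ := ae_hasDerivAt_of_FTC hI hconv ψ₀ hftc₀ hli₀
  have hd₁ := ae_hasDerivAt_of_FTC hI hconv ψ₁ hftc₁ hli₁
  have hd : ∀ᵐ x : ℝ, x ∈ I →
      deriv ψl x = (1 - lam) * deriv ψ₀ x + lam * deriv ψ₁ x := by
    filter_upwards [hd₀, hd₁] with x a b hx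
    exact (((a hx).const_mul (1 - lam)).add ((b hx).const_mul lam)).deriv
  -- Memℒp
  have hmem1 : MemLp ψl 2 (volume.restrict I) := (hL₀.const_mul (1 - lam)).add (hL₁.const_mul lam)
  -- FTC
  have hftc : ∀ x ∈ I, ∀ y ∈ I, ψl y = ψl x + ∫ t in x..y, deriv ψl t := by
    intro x hx y hy
    have huIcc : Set.uIcc x y ⊆ I := hconv.ordConnected.uIcc_subset hx hy
    have hint₀' : IntervalIntegrable (deriv ψ₀) volume x y :=
      (hli₀.integrableOn_compact_subset huIcc isCompact_uIcc).intervalIntegrable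
    have hint₁' : IntervalIntegrable (deriv ψ₁) volume x y :=
      (hli₁.integrableOn_compact_subset huIcc isCompact_uIcc).intervalIntegrable
    have hcongr : ∫ t in x..y, deriv ψl t
        = ∫ t in x..y, ((1 - lam) * deriv ψ₀ t + lam * deriv ψ₁ t) := by
      apply intervalIntegral.integral_congr_ae
      filter_upwards [hd] with t ht hmem
      exact ht (huIcc (Set.uIoc_subset_uIcc hmem))
    rw [hcongr, intervalIntegral.integral_add (hint₀'.const_mul _) (hint₁'.const_mul _),
      intervalIntegral.integral_const_mul, intervalIntegral.integral_const_mul]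
    have e₀ := hftc₀ x hx y hy
    have e₁ := hftc₁ x hx y hy
    simp only [hψl]
    rw [e₀, e₁]
    ring
  -- LocallyIntegrableOn (deriv ψl)^2
  have hloc : LocallyIntegrableOn (fun x => (deriv ψl x)^2) I volume := by
    intro x hx
    obtain ⟨t₀, ht₀, hi₀⟩ := hloc₀ x hx
    obtain ⟨t₁, ht₁, hi₁⟩ := hloc₁ x hx
    rw [mem_nhdsWithin] at ht₀ ht₁
    obtain ⟨v₀, hv₀o, hxv₀, hv₀⟩ := ht₀
    obtain ⟨v₁, hv₁o, hxv₁, hv₁⟩ := ht₁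
    refine ⟨(v₀ ∩ v₁) ∩ I, mem_nhdsWithin.2 ⟨v₀ ∩ v₁, hv₀o.inter hv₁o, ⟨hxv₀, hxv₁⟩,
      fun y hy => hy⟩, ?_⟩
    have hmu : MeasurableSet ((v₀ ∩ v₁) ∩ I) := ((hv₀o.inter hv₁o).measurableSet).inter hmI
    have hg : IntegrableOn (fun y => (deriv ψ₀ y)^2 + (deriv ψ₁ y)^2) ((v₀ ∩ v₁) ∩ I) volume := by
      apply Integrable.add
      · exact hi₀.mono_set fun y hy => hv₀ ⟨hy.1.1, hy.2⟩
      · exact hi₁.mono_set fun y hy => hv₁ ⟨hy.1.2, hy.2⟩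
    refine hg.mono' (((measurable_deriv ψl).pow_const 2).aestronglyMeasurable.restrict) ?_
    filter_upwards [ae_restrict_mem hmu, ae_restrict_of_ae hd] with y hy hdy
    rw [Real.norm_eq_abs, abs_of_nonneg (sq_nonneg _), hdy hy.2]
    nlinarith [mul_nonneg (mul_nonneg hl0 (sub_nonneg.2 hl1)) (sq_nonneg (deriv ψ₀ y - deriv ψ₁ y)),
      mul_nonneg hl0 (sq_nonneg (deriv ψ₁ y)), mul_nonneg (sub_nonneg.2 hl1) (sq_nonneg (deriv ψ₀ y))]
  -- a.e. Ioo
  have haeIoo : ∀ᵐ x ∂(volume.restrict I), ψl x ∈ Set.Ioo (0:ℝ) 1 := by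
    filter_upwards [hae₀, hae₁] with x m₀ m₁
    exact combo_mem_Ioo m₀ m₁ hl0 hl1
  -- pointwise key inequality, a.e. on I
  have hae : ∀ᵐ x ∂(volume.restrict I),
      (deriv ψl x)^2 / (1 - (ψl x)^2) + (ψl x)^2
        ≤ (1-lam) * ((deriv ψ₀ x)^2/(1-(ψ₀ x)^2) + (ψ₀ x)^2)
          + lam * ((deriv ψ₁ x)^2/(1-(ψ₁ x)^2) + (ψ₁ x)^2)
      ∧ 0 ≤ (deriv ψl x)^2 / (1 - (ψl x)^2) := by
    filter_upwards [hae₀, hae₁, ae_restrict_of_ae hd, ae_restrict_mem hmI] with x m₀ m₁ hdx hxI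
    have hdx' := hdx hxI
    have hcombo := combo_mem_Ioo m₀ m₁ hl0 hl1
    constructor
    · have := key_ineq (p₀ := deriv ψ₀ x) (p₁ := deriv ψ₁ x) m₀ m₁ hl0 hl1
      simp only [hψl]
      rw [hdx']
      exact this
    · apply div_nonneg (sq_nonneg _)
      obtain ⟨hc0, hc1⟩ := hcombo
      simp only [hψl]
      nlinarith
  -- integrability of the energy integrand for ψ₀, ψ₁
  have hA₀ : IntegrableOn (fun x => (deriv ψ₀ x)^2/(1-(ψ₀ x)^2) + (ψ₀ x)^2) I volume :=
    hint₀.add hL₀.integrable_sq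
  have hA₁ : IntegrableOn (fun x => (deriv ψ₁ x)^2/(1-(ψ₁ x)^2) + (ψ₁ x)^2) I volume :=
    hint₁.add hL₁.integrable_sq
  have hB : IntegrableOn (fun x => (1-lam) * ((deriv ψ₀ x)^2/(1-(ψ₀ x)^2) + (ψ₀ x)^2)
      + lam * ((deriv ψ₁ x)^2/(1-(ψ₁ x)^2) + (ψ₁ x)^2)) I volume :=
    (hA₀.const_mul _).add (hA₁.const_mul _)
  -- measurability of the combo integrand
  have hvalmeas : AEStronglyMeasurable (fun x => (deriv ψl x)^2 / (1 - (ψl x)^2))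
      (volume.restrict I) := by
    apply AEMeasurable.aestronglyMeasurable
    exact (((measurable_deriv ψl).pow_const 2).aemeasurable).div
      ((aemeasurable_const.sub ((hmem1.aestronglyMeasurable.aemeasurable).pow_const 2)))
  -- Integrability of combo value
  have hval : IntegrableOn (fun x => (deriv ψl x)^2 / (1 - (ψl x)^2)) I volume := by
    refine hB.mono' hvalmeas ?_
    filter_upwards [hae] with x hx
    rw [Real.norm_eq_abs, abs_of_nonneg hx.2]
    nlinarith [sq_nonneg (ψl x), hx.1]
  refine ⟨⟨hmem1, hftc, hloc, haeIoo, hval⟩, ?_⟩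
  -- the energy inequality
  have hψlsq : Integrable (fun x => (ψl x)^2) (volume.restrict I) := hmem1.integrable_sq
  have hsm : AEStronglyMeasurable s (volume.restrict I) := hs_cont.aestronglyMeasurable.restrict
  have hAl : IntegrableOn (fun x => (deriv ψl x)^2/(1-(ψl x)^2) + (ψl x)^2) I volume :=
    hval.add hψlsq
  have hlhsInt : IntegrableOn
      (fun x => ((deriv ψl x)^2/(1-(ψl x)^2) + (ψl x)^2) * s x) I volume := by
    refine hAl.mono' ((hvalmeas.add (hmem1.aestronglyMeasurable.aemeasurable.pow_const
      2).aestronglyMeasurable).mul hsm) ?_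
    filter_upwards [hae] with x hx
    have h1 : 0 ≤ (deriv ψl x)^2/(1-(ψl x)^2) + (ψl x)^2 := by nlinarith [hx.2, sq_nonneg (ψl x)]
    rw [Real.norm_eq_abs, abs_mul, abs_of_nonneg h1]
    calc ((deriv ψl x)^2/(1-(ψl x)^2) + (ψl x)^2) * |s x|
        ≤ ((deriv ψl x)^2/(1-(ψl x)^2) + (ψl x)^2) * 1 := by
          apply mul_le_mul_of_nonneg_left _ h1
          rw [abs_of_nonneg (hs0 x)]; exact hs1 x
      _ = _ := mul_one _
  have hA₀s : IntegrableOn (fun x => ((deriv ψ₀ x)^2/(1-(ψ₀ x)^2) + (ψ₀ x)^2) * s x) I volume := by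
    refine hA₀.mono' ((hint₀.aestronglyMeasurable.add
      (hL₀.aestronglyMeasurable.aemeasurable.pow_const 2).aestronglyMeasurable).mul hsm) ?_
    filter_upwards [hae₀] with x hx
    have h0 : 0 < 1 - (ψ₀ x)^2 := by nlinarith [hx.1, hx.2]
    have h1 : 0 ≤ (deriv ψ₀ x)^2/(1-(ψ₀ x)^2) + (ψ₀ x)^2 :=
      add_nonneg (div_nonneg (sq_nonneg _) h0.le) (sq_nonneg _)
    rw [Real.norm_eq_abs, abs_mul, abs_of_nonneg h1]
    calc ((deriv ψ₀ x)^2/(1-(ψ₀ x)^2) + (ψ₀ x)^2) * |s x|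
        ≤ ((deriv ψ₀ x)^2/(1-(ψ₀ x)^2) + (ψ₀ x)^2) * 1 := by
          apply mul_le_mul_of_nonneg_left _ h1
          rw [abs_of_nonneg (hs0 x)]; exact hs1 x
      _ = _ := mul_one _
  have hA₁s : IntegrableOn (fun x => ((deriv ψ₁ x)^2/(1-(ψ₁ x)^2) + (ψ₁ x)^2) * s x) I volume := by
    refine hA₁.mono' ((hint₁.aestronglyMeasurable.add
      (hL₁.aestronglyMeasurable.aemeasurable.pow_const 2).aestronglyMeasurable).mul hsm) ?_
    filter_upwards [hae₁] with x hx
    have h0 : 0 < 1 - (ψ₁ x)^2 := by nlinarith [hx.1, hx.2]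
    have h1 : 0 ≤ (deriv ψ₁ x)^2/(1-(ψ₁ x)^2) + (ψ₁ x)^2 :=
      add_nonneg (div_nonneg (sq_nonneg _) h0.le) (sq_nonneg _)
    rw [Real.norm_eq_abs, abs_mul, abs_of_nonneg h1]
    calc ((deriv ψ₁ x)^2/(1-(ψ₁ x)^2) + (ψ₁ x)^2) * |s x|
        ≤ ((deriv ψ₁ x)^2/(1-(ψ₁ x)^2) + (ψ₁ x)^2) * 1 := by
          apply mul_le_mul_of_nonneg_left _ h1
          rw [abs_of_nonneg (hs0 x)]; exact hs1 x
      _ = _ := mul_one _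
  have hrhsInt : IntegrableOn (fun x =>
      (1-lam) * (((deriv ψ₀ x)^2/(1-(ψ₀ x)^2) + (ψ₀ x)^2) * s x)
      + lam * (((deriv ψ₁ x)^2/(1-(ψ₁ x)^2) + (ψ₁ x)^2) * s x)) I volume :=
    (hA₀s.const_mul _).add (hA₁s.const_mul _)
  have hmono : ∫ x in I, ((deriv ψl x)^2/(1-(ψl x)^2) + (ψl x)^2) * s x
      ≤ ∫ x in I, ((1-lam) * (((deriv ψ₀ x)^2/(1-(ψ₀ x)^2) + (ψ₀ x)^2) * s x)
        + lam * (((deriv ψ₁ x)^2/(1-(ψ₁ x)^2) + (ψ₁ x)^2) * s x)) := by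
    apply integral_mono_ae hlhsInt hrhsInt
    filter_upwards [hae] with x hx
    have := mul_le_mul_of_nonneg_right hx.1 (hs0 x)
    calc ((deriv ψl x)^2/(1-(ψl x)^2) + (ψl x)^2) * s x
        ≤ ((1-lam) * ((deriv ψ₀ x)^2/(1-(ψ₀ x)^2) + (ψ₀ x)^2)
          + lam * ((deriv ψ₁ x)^2/(1-(ψ₁ x)^2) + (ψ₁ x)^2)) * s x := this
      _ = _ := by ring
  have hsplit : ∫ x in I, ((1-lam) * (((deriv ψ₀ x)^2/(1-(ψ₀ x)^2) + (ψ₀ x)^2) * s x)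
        + lam * (((deriv ψ₁ x)^2/(1-(ψ₁ x)^2) + (ψ₁ x)^2) * s x))
      = (1-lam) * (∫ x in I, ((deriv ψ₀ x)^2/(1-(ψ₀ x)^2) + (ψ₀ x)^2) * s x)
        + lam * (∫ x in I, ((deriv ψ₁ x)^2/(1-(ψ₁ x)^2) + (ψ₁ x)^2) * s x) := by
    rw [integral_add (hA₀s.const_mul _) (hA₁s.const_mul _), MeasureTheory.integral_const_mul, MeasureTheory.integral_const_mul]
  show (1/2) * ∫ x in I, ((deriv ψl x)^2/(1-(ψl x)^2) + (ψl x)^2) * s x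
      ≤ (1-lam) * EJ s I ψ₀ + lam * EJ s I ψ₁
  rw [EJ, EJ]
  calc (1/2) * ∫ x in I, ((deriv ψl x)^2/(1-(ψl x)^2) + (ψl x)^2) * s x
      ≤ (1/2) * ((1-lam) * (∫ x in I, ((deriv ψ₀ x)^2/(1-(ψ₀ x)^2) + (ψ₀ x)^2) * s x)
        + lam * (∫ x in I, ((deriv ψ₁ x)^2/(1-(ψ₁ x)^2) + (ψ₁ x)^2) * s x)) := by
        rw [← hsplit]; linarith [hmono]
    _ = _ := by ring


/-- `𝒥⁻_{x₀}` and `𝒥⁺_{x₀}` are convex sets, and the functionals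
`𝓔⁻_{x₀}` and `𝓔⁺_{x₀}` are convex on them. -/
theorem J_E_convex (s₀ a : ℝ) (s : ℝ → ℝ)
    (hs₀ : 0 < s₀) (hs₀1 : s₀ < 1) (ha : 0 < a)
    (hnotch : NotchProfile s₀ a s) (x₀ : ℝ) :
    (∀ ψ₀ ψ₁ : ℝ → ℝ, MemJ (Set.Iio x₀) ψ₀ → MemJ (Set.Iio x₀) ψ₁ →
      ∀ lam ∈ Set.Icc (0:ℝ) 1,
        MemJ (Set.Iio x₀) (fun x => (1 - lam) * ψ₀ x + lam * ψ₁ x) ∧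
        EJ s (Set.Iio x₀) (fun x => (1 - lam) * ψ₀ x + lam * ψ₁ x)
          ≤ (1 - lam) * EJ s (Set.Iio x₀) ψ₀ + lam * EJ s (Set.Iio x₀) ψ₁) ∧
    (∀ ψ₀ ψ₁ : ℝ → ℝ, MemJ (Set.Ioi x₀) ψ₀ → MemJ (Set.Ioi x₀) ψ₁ →
      ∀ lam ∈ Set.Icc (0:ℝ) 1,
        MemJ (Set.Ioi x₀) (fun x => (1 - lam) * ψ₀ x + lam * ψ₁ x) ∧
        EJ s (Set.Ioi x₀) (fun x => (1 - lam) * ψ₀ x + lam * ψ₁ x)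
          ≤ (1 - lam) * EJ s (Set.Ioi x₀) ψ₀ + lam * EJ s (Set.Ioi x₀) ψ₁) := by
  obtain ⟨⟨K, hK⟩, hlow, hupp, -⟩ := hnotch
  have hs_cont : Continuous s := hK.continuous
  have hs0 : ∀ x, 0 ≤ s x := fun x => le_trans hs₀.le (hlow x)
  constructor
  · intro ψ₀ ψ₁ h₀ h₁ lam hl
    exact memJ_convex isOpen_Iio (convex_Iio x₀) s hs_cont hs0 hupp ψ₀ ψ₁ h₀ h₁ lam hl
  · intro ψ₀ ψ₁ h₀ h₁ lam hl
    exact memJ_convex isOpen_Ioi (convex_Ioi x₀) s hs_cont hs0 hupp ψ₀ ψ₁ h₀ h₁ lam hl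
end
end
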